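/- Let t : Fin n → A × B with n ≥ 1 model a bag relation that does not satisfy the FD X→Y. Then τ(t) := (pdep(t) − pdepY)/(1 − pdepY) satisfies τ(t) = 1 − (Σ_a p₁(a)·h(Y∣a)) / h(Y), where h(Y∣a) := 1 − Σ_b p(b∣a)² and h(Y) := 1 − Σ_b p₂(b)². In particular, since t violates X→Y, t has at least two distinct Y-values and hence h(Y) > 0, so both sides are well-defined. (Equivalent logical-entropy formula for τ.) -/

import Mathlib

namespace AFD

open Finset

variable {A B : Type*}

/-- Number of indices with X-value `a`. -/
def c1 {n : ℕ} [DecidableEq A] (t : Fin n → A × B) (a : A) : ℕ :=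
  (Finset.univ.filter fun i => (t i).1 = a).card

/-- Number of indices with Y-value `b`. -/
def c2 {n : ℕ} [DecidableEq B] (t : Fin n → A × B) (b : B) : ℕ :=
  (Finset.univ.filter fun i => (t i).2 = b).card

/-- Number of indices with tuple value `(a, b)`. -/
def cnt {n : ℕ} [DecidableEq A] [DecidableEq B] (t : Fin n → A × B) (a : A) (b : B) : ℕ :=
  (Finset.univ.filter fun i => t i = (a, b)).card

/-- Marginal probability of X-value `a`. -/
noncomputable def p1 {n : ℕ} [DecidableEq A] (t : Fin n → A × B) (a : A) : ℝ :=
  (c1 t a : ℝ) / n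

/-- Marginal probability of Y-value `b`. -/
noncomputable def p2 {n : ℕ} [DecidableEq B] (t : Fin n → A × B) (b : B) : ℝ :=
  (c2 t b : ℝ) / n

/-- Joint probability of `(a, b)`. -/
noncomputable def pJ {n : ℕ} [DecidableEq A] [DecidableEq B] (t : Fin n → A × B)
    (a : A) (b : B) : ℝ :=
  (cnt t a b : ℝ) / n

/-- Conditional probability of Y-value `b` given X-value `a` (with the `0/0 = 0` convention,
which is automatic for real division in Lean). -/
noncomputable def pC {n : ℕ} [DecidableEq A] [DecidableEq B] (t : Fin n → A × B)
    (a : A) (b : B) : ℝ :=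
  pJ t a b / p1 t a

/-- The set of distinct X-values. -/
def domX {n : ℕ} [DecidableEq A] (t : Fin n → A × B) : Finset A :=
  Finset.univ.image fun i => (t i).1

/-- The set of distinct Y-values. -/
def domY {n : ℕ} [DecidableEq B] (t : Fin n → A × B) : Finset B :=
  Finset.univ.image fun i => (t i).2

/-- The set of distinct tuples. -/
def domXY {n : ℕ} [DecidableEq A] [DecidableEq B] (t : Fin n → A × B) : Finset (A × B) :=
  Finset.univ.image t

/-- The probabilistic dependency `pdep(X → Y)`. -/
noncomputable def pdep {n : ℕ} [DecidableEq A] [DecidableEq B] (t : Fin n → A × B) : ℝ :=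
  ∑ a ∈ domX t, p1 t a * ∑ b ∈ domY t, (pC t a b) ^ 2

/-- The probabilistic self-dependency `pdep(Y)`. -/
noncomputable def pdepY {n : ℕ} [DecidableEq B] (t : Fin n → A × B) : ℝ :=
  ∑ b ∈ domY t, (p2 t b) ^ 2

/-- The (X;Y)-permutation of `t` induced by the permutation `σ`. -/
def permRel {n : ℕ} (t : Fin n → A × B) (σ : Equiv.Perm (Fin n)) : Fin n → A × B :=
  fun i => ((t i).1, (t (σ i)).2)

/-- `t` satisfies the functional dependency X → Y. -/
def satFD {n : ℕ} (t : Fin n → A × B) : Prop :=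
  ∀ i j, (t i).1 = (t j).1 → (t i).2 = (t j).2

/-! Since `∑ₐ p₁(a) = 1`, the weighted conditional entropy `∑ₐ p₁(a) (1 - ∑_b p(b∣a)²)` equals
`1 - pdep`, after which the identity is algebra. The denominator `h(Y) = 1 - ∑_b p₂(b)²` is
positive because a violation of X → Y exhibits two distinct Y-values of positive mass, and
`p² < p` at any mass strictly between `0` and `1`. -/

lemma sum_sq_lt_one_of_two_pos {ι : Type*} [DecidableEq ι] {s : Finset ι} {p : ι → ℝ}
    (hp : ∀ x ∈ s, 0 ≤ p x) (hsum : ∑ x ∈ s, p x = 1) {x y : ι} (hx : x ∈ s) (hy : y ∈ s)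
    (hxy : x ≠ y) (hpx : 0 < p x) (hpy : 0 < p y) :
    ∑ z ∈ s, p z ^ 2 < 1 := by
  have hle_one : ∀ z ∈ s, p z ≤ 1 := fun z hz => hsum ▸ single_le_sum hp hz
  have hsq_le : ∀ z ∈ s, p z ^ 2 ≤ p z := fun z hz => by
    nlinarith [hp z hz, hle_one z hz]
  have hpx_lt : p x < 1 := by
    have hpair : p x + p y ≤ 1 := by
      rw [← sum_pair hxy, ← hsum]
      exact sum_le_sum_of_subset_of_nonneg (by simp [insert_subset_iff, hx, hy])
        fun z hz _ => hp z hz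
    linarith
  calc ∑ z ∈ s, p z ^ 2 < ∑ z ∈ s, p z :=
        sum_lt_sum hsq_le ⟨x, hx, by nlinarith⟩
    _ = 1 := hsum

section Marginals

variable {n : ℕ}

lemma sum_card_fiber_div_eq_one {α : Type*} [DecidableEq α] (hn : n ≠ 0) (f : Fin n → α) :
    ∑ a ∈ univ.image f, (#{i | f i = a} : ℝ) / n = 1 := by
  rw [← sum_div, ← Nat.cast_sum, ← card_eq_sum_card_image, card_univ, Fintype.card_fin,
    div_self (Nat.cast_ne_zero.mpr hn)]

lemma sum_p1_eq_one [DecidableEq A] (hn : n ≠ 0) (t : Fin n → A × B) :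
    ∑ a ∈ domX t, p1 t a = 1 :=
  sum_card_fiber_div_eq_one hn _

lemma sum_p2_eq_one [DecidableEq B] (hn : n ≠ 0) (t : Fin n → A × B) :
    ∑ b ∈ domY t, p2 t b = 1 :=
  sum_card_fiber_div_eq_one hn _

lemma p2_pos [DecidableEq B] (t : Fin n → A × B) (i : Fin n) : 0 < p2 t (t i).2 := by
  have hi : i ∈ ({j | (t j).2 = (t i).2} : Finset (Fin n)) := by simp
  exact div_pos (Nat.cast_pos.mpr (card_pos.mpr ⟨i, hi⟩)) (Nat.cast_pos.mpr i.pos)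

lemma mem_domY [DecidableEq B] (t : Fin n → A × B) (i : Fin n) : (t i).2 ∈ domY t :=
  mem_image_of_mem _ (mem_univ i)

lemma pdepY_lt_one [DecidableEq B] {t : Fin n → A × B} (h : ¬ satFD t) : pdepY t < 1 := by
  simp only [satFD, not_forall] at h
  obtain ⟨i, j, -, hij⟩ := h
  exact sum_sq_lt_one_of_two_pos (fun b _ => by unfold p2; positivity)
    (sum_p2_eq_one i.pos.ne' t) (mem_domY t i) (mem_domY t j) hij (p2_pos t i) (p2_pos t j)

lemma sum_p1_mul_one_sub [DecidableEq A] [DecidableEq B] (hn : n ≠ 0) (t : Fin n → A × B) :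
    ∑ a ∈ domX t, p1 t a * (1 - ∑ b ∈ domY t, pC t a b ^ 2) = 1 - pdep t := by
  simp only [mul_sub, mul_one, sum_sub_distrib, sum_p1_eq_one hn, pdep]

end Marginals

theorem tau_eq_one_sub_logical_entropy_ratio_general {A B : Type*} [DecidableEq A] [DecidableEq B]
    {n : ℕ} (t : Fin n → A × B) (h : ¬ satFD t) :
    0 < 1 - pdepY t ∧
    (pdep t - pdepY t) / (1 - pdepY t) =
      1 - (∑ a ∈ domX t, p1 t a * (1 - ∑ b ∈ domY t, (pC t a b) ^ 2)) / (1 - pdepY t) := by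
  have hY : 0 < 1 - pdepY t := sub_pos.mpr (pdepY_lt_one h)
  have hn : n ≠ 0 := by
    rintro rfl
    exact h fun i => i.elim0
  refine ⟨hY, ?_⟩
  rw [sum_p1_mul_one_sub hn, eq_sub_iff_add_eq, ← add_div, div_eq_one_iff_eq hY.ne']
  ring

/-- Equivalent logical-entropy formula for τ, for relations violating the FD X→Y:
`τ(t) = 1 − (∑_a p₁(a)·h(Y∣a)) / h(Y)`, where `h(Y) = 1 − pdepY > 0` since `t`
has at least two distinct Y-values. -/
theorem tau_eq_one_sub_logical_entropy_ratio {A B : Type*} [DecidableEq A] [DecidableEq B]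
    {n : ℕ} (hn : 1 ≤ n) (t : Fin n → A × B) (h : ¬ satFD t) :
    0 < 1 - pdepY t ∧
    (pdep t - pdepY t) / (1 - pdepY t) =
      1 - (∑ a ∈ domX t, p1 t a * (1 - ∑ b ∈ domY t, (pC t a b) ^ 2)) / (1 - pdepY t) :=
  tau_eq_one_sub_logical_entropy_ratio_general t h

end AFD
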